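/- Let A = B #_σ H be a crossed product algebra with invertible 2-cocycle σ. Then the extension A / B is H-Galois: the canonical map can : A ⊗_B A → A ⊗ H, induced by x ⊗ y ↦ (x ⊗ 1)·ψ(y) = Σ x y₍₀₎ ⊗ y₍₁₎, is bijective. -/

import Mathlib

open TensorProduct LinearMap

noncomputable section

namespace CrossedGalois

/-- Convolution product of two linear maps from a coalgebra to an algebra. -/
def conv (k : Type) [Field k] {C B : Type} [AddCommGroup C] [Module k C] [Coalgebra k C]
    [Ring B] [Algebra k B] (f g : C →ₗ[k] B) : C →ₗ[k] B :=
  (LinearMap.mul' k B) ∘ₗ (TensorProduct.map f g) ∘ₗ (Coalgebra.comul (R := k))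

/-- The unit `η ∘ ε` for the convolution product. -/
def convOne (k : Type) [Field k] (C B : Type) [AddCommGroup C] [Module k C] [Coalgebra k C]
    [Ring B] [Algebra k B] : C →ₗ[k] B :=
  (Algebra.linearMap k B) ∘ₗ (Coalgebra.counit (R := k))

/-- Convolution invertibility. -/
def ConvInvertible (k : Type) [Field k] {C B : Type} [AddCommGroup C] [Module k C]
    [Coalgebra k C] [Ring B] [Algebra k B] (f : C →ₗ[k] B) : Prop :=
  ∃ g : C →ₗ[k] B, conv k f g = convOne k C B ∧ conv k g f = convOne k C B

variable (k : Type) [Field k]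

section CrossedProduct

variable (B H : Type) [Ring B] [Algebra k B] [Ring H] [Bialgebra k H]

/-- `h ↦ α (h ⊗ b)`. -/
def actOn (α : H ⊗[k] B →ₗ[k] B) (b : B) : H →ₗ[k] B :=
  α ∘ₗ ((TensorProduct.mk k H B).flip b)

/-- `α` is a weak action of the bialgebra `H` on the algebra `B` :
`h · (ab) = Σ (h₁ · a)(h₂ · b)` and `h · 1 = ε(h) 1`. -/
structure IsWeakAction (α : H ⊗[k] B →ₗ[k] B) : Prop where
  smul_mul : ∀ (h : H) (a b : B),
    α (h ⊗ₜ (a * b)) =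
      LinearMap.mul' k B ((TensorProduct.map α α)
        ((TensorProduct.tensorTensorTensorComm k H H B B)
          ((Coalgebra.comul (R := k) h) ⊗ₜ (a ⊗ₜ b))))
  smul_one : ∀ h : H, α (h ⊗ₜ (1 : B)) = (Coalgebra.counit (R := k) h) • (1 : B)

/-- The 2-cocycle condition
`Σ (h₁ · σ(g₁,l₁)) σ(h₂, g₂l₂) = Σ σ(h₁,g₁) σ(h₂g₂, l)`
together with the normalisation `σ(h,1) = σ(1,h) = ε(h)1`. -/
structure IsCocycle (α : H ⊗[k] B →ₗ[k] B) (σ : H ⊗[k] H →ₗ[k] B) : Prop where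
  cocycle :
    conv k (α ∘ₗ lTensor H σ) (σ ∘ₗ lTensor H (LinearMap.mul' k H)) =
    conv k (σ ∘ₗ lTensor H ((TensorProduct.rid k H).toLinearMap ∘ₗ
              lTensor H (Coalgebra.counit (R := k))))
           (σ ∘ₗ (rTensor H (LinearMap.mul' k H)) ∘ₗ
              (TensorProduct.assoc k H H H).symm.toLinearMap)
  norm_right : ∀ h : H, σ (h ⊗ₜ (1 : H)) = (Coalgebra.counit (R := k) h) • (1 : B)
  norm_left : ∀ h : H, σ ((1 : H) ⊗ₜ h) = (Coalgebra.counit (R := k) h) • (1 : B)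

/-- `B` is a twisted `H`-module:  `1 · b = b` and
`Σ (h₁ · (g₁ · b)) σ(h₂,g₂) = Σ σ(h₁,g₁) ((h₂g₂) · b)`. -/
structure IsTwistedModule (α : H ⊗[k] B →ₗ[k] B) (σ : H ⊗[k] H →ₗ[k] B) : Prop where
  one_smul : ∀ b : B, α ((1 : H) ⊗ₜ b) = b
  twisted : ∀ b : B,
    conv k (α ∘ₗ lTensor H (actOn k B H α b)) σ =
    conv k σ ((actOn k B H α b) ∘ₗ LinearMap.mul' k H)

/-- The multiplication of the crossed product `B #_σ H`:
`(a # h)(b # g) = Σ a (h₁·b) σ(h₂,g₁) # h₃g₂`. -/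
def cpMul (α : H ⊗[k] B →ₗ[k] B) (σ : H ⊗[k] H →ₗ[k] B) :
    (B ⊗[k] H) ⊗[k] (B ⊗[k] H) →ₗ[k] B ⊗[k] H :=
  (rTensor H (LinearMap.mul' k B)) ∘ₗ
  (TensorProduct.assoc k B B H).symm.toLinearMap ∘ₗ
  (lTensor B
    ((rTensor H (LinearMap.mul' k B)) ∘ₗ
     (TensorProduct.assoc k B B H).symm.toLinearMap ∘ₗ
     (TensorProduct.map α (TensorProduct.map σ (LinearMap.mul' k H))) ∘ₗ
     (lTensor (H ⊗[k] B) (TensorProduct.tensorTensorTensorComm k H H H H).toLinearMap) ∘ₗ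
     (TensorProduct.tensorTensorTensorComm k H (H ⊗[k] H) B (H ⊗[k] H)).toLinearMap ∘ₗ
     (TensorProduct.map ((lTensor H (Coalgebra.comul (R := k))) ∘ₗ (Coalgebra.comul (R := k)))
       (lTensor B (Coalgebra.comul (R := k)))))) ∘ₗ
  (TensorProduct.assoc k B H (B ⊗[k] H)).toLinearMap

/-- The unit `1 # 1` of the crossed product. -/
def cpOne : B ⊗[k] H := (1 : B) ⊗ₜ (1 : H)

/-- The crossed product multiplication is associative with unit `1 ⊗ 1`. -/
def IsCpAlgebra (α : H ⊗[k] B →ₗ[k] B) (σ : H ⊗[k] H →ₗ[k] B) : Prop :=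
  (∀ x y z : B ⊗[k] H,
      cpMul k B H α σ ((cpMul k B H α σ (x ⊗ₜ y)) ⊗ₜ z) =
      cpMul k B H α σ (x ⊗ₜ (cpMul k B H α σ (y ⊗ₜ z)))) ∧
  (∀ x : B ⊗[k] H, cpMul k B H α σ ((cpOne k B H) ⊗ₜ x) = x) ∧
  (∀ x : B ⊗[k] H, cpMul k B H α σ (x ⊗ₜ (cpOne k B H)) = x)

/-- The right `H`-coaction `id_B ⊗ Δ` on `B ⊗ H`. -/
def cpCoact : B ⊗[k] H →ₗ[k] (B ⊗[k] H) ⊗[k] H :=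
  (TensorProduct.assoc k B H H).symm.toLinearMap ∘ₗ lTensor B (Coalgebra.comul (R := k))

end CrossedProduct

section Galois

variable (H : Type) [Ring H] [Bialgebra k H]

/-- The submodule of `A ⊗ A` spanned by `xb ⊗ y - x ⊗ by` for `b` in a given subset `S`,
with respect to a given multiplication map `M`; its quotient is `A ⊗_B A`. -/
def midRel {A : Type} [AddCommGroup A] [Module k A]
    (M : A ⊗[k] A →ₗ[k] A) (S : Set A) : Submodule k (A ⊗[k] A) :=
  Submodule.span k {z | ∃ x y b, b ∈ S ∧
    z = (M (x ⊗ₜ b)) ⊗ₜ y - x ⊗ₜ (M (b ⊗ₜ y))}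

/-- The map `can' : A ⊗ A → A ⊗ H`, `x ⊗ y ↦ Σ x y₍₀₎ ⊗ y₍₁₎`. -/
def canMap {A : Type} [AddCommGroup A] [Module k A]
    (M : A ⊗[k] A →ₗ[k] A) (ρ : A →ₗ[k] A ⊗[k] H) : A ⊗[k] A →ₗ[k] A ⊗[k] H :=
  (rTensor H M) ∘ₗ (TensorProduct.assoc k A A H).symm.toLinearMap ∘ₗ (lTensor A ρ)

/-- The extension is `H`-Galois: the canonical map descends to a bijection
`A ⊗_B A → A ⊗ H`. -/
def IsGalois {A : Type} [AddCommGroup A] [Module k A]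
    (M : A ⊗[k] A →ₗ[k] A) (ρ : A →ₗ[k] A ⊗[k] H) (S : Set A) : Prop :=
  ∃ can : ((A ⊗[k] A) ⧸ midRel k M S) →ₗ[k] A ⊗[k] H,
    can ∘ₗ (midRel k M S).mkQ = canMap k H M ρ ∧ Function.Bijective can

/-- `A` is a right `H`-comodule algebra. -/
structure IsComodAlg {A : Type} [Ring A] [Algebra k A]
    (ρ : A →ₗ[k] A ⊗[k] H) : Prop where
  coassoc : ∀ a : A, (rTensor H ρ) (ρ a) =
    (TensorProduct.assoc k A H H).symm ((lTensor A (Coalgebra.comul (R := k))) (ρ a))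
  counit_id : ∀ a : A,
    (TensorProduct.rid k A) ((lTensor A (Coalgebra.counit (R := k))) (ρ a)) = a
  mul : ∀ a b : A, ρ (a * b) = ρ a * ρ b
  one : ρ 1 = 1

end Galois

end CrossedGalois

/-!
Write `R_ν (p ⊗ c) = Σ p ν(c₁) ⊗ c₂` for `ν : C → B`; then `R_ν ∘ R_μ = R_{μ * ν}`, so `R_ν` is
bijective when `ν` is convolution invertible. In `A = B #_σ H`, right multiplication by `b # 1` is
`R_{h ↦ h·b}` and `x (b # g) = (x (b # 1)) (1 # g)`; as the weak action makes `b ↦ (h ↦ h·b)`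
multiplicative, `(x (b # 1)) (c # g) = x (bc # g)`, so `can` descends to `A ⊗_B A`. Since
`c # g = (c # 1)(1 # g)`, the map `x ⊗ h ↦ [x ⊗ (1 # h)]` from `A ⊗ H` onto `A ⊗_B A` is
surjective, and followed by `can` it is `x ⊗ h ↦ Σ x (1 # h₁) ⊗ h₂`, which up to associators is
`(id_B ⊗ R_{id_H}) ∘ R_σ`: a bijection, because `σ` and `id_H` (with the antipode as inverse) are
convolution invertible. Hence `can` is bijective.
-/

namespace CrossedGalois

open Coalgebra

section TensorProduct

variable {k B M N P Q : Type} [Field k] [Ring B] [Algebra k B]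
  [AddCommGroup M] [Module k M] [AddCommGroup N] [Module k N]
  [AddCommGroup P] [Module k P] [AddCommGroup Q] [Module k Q]

theorem rTensor_mul'_assoc_symm_tmul (a : B) (z : B ⊗[k] N) :
    rTensor N (mul' k B) ((TensorProduct.assoc k B B N).symm (a ⊗ₜ z)) = a • z := by
  induction z using TensorProduct.induction_on with
  | zero => simp
  | add u v hu hv => simp [tmul_add, hu, hv]
  | tmul b n => simp [smul_tmul']

theorem lTensor_apply_smul (φ : M →ₗ[k] N) (a : B) (z : B ⊗[k] M) :
    lTensor B φ (a • z) = a • lTensor B φ z :=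
  (AlgebraTensorModule.lTensor B B φ).map_smul a z

theorem smul_map_apply (p : B) (f : M →ₗ[k] B) (g : N →ₗ[k] P) (w : M ⊗[k] N) :
    p • map f g w = map (mulLeft k p ∘ₗ f) g w := by
  induction w using TensorProduct.induction_on with
  | zero => simp
  | add u v hu hv => simp [hu, hv]
  | tmul m n => simp [smul_tmul']

theorem tensorTensorTensorComm_tmul_left (m : M) (n : N) (w : P ⊗[k] Q) :
    tensorTensorTensorComm k M N P Q ((m ⊗ₜ n) ⊗ₜ w) = map (mk k M P m) (mk k N Q n) w := by
  induction w using TensorProduct.induction_on with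
  | zero => simp
  | add u v hu hv => simp [tmul_add, hu, hv]
  | tmul p q => simp

theorem rTensor_map_comp_comul_comul {C : Type} [AddCommGroup C] [Module k C] [Coalgebra k C]
    (f : C →ₗ[k] M) (g : C →ₗ[k] N) (c : C) :
    rTensor C (map f g ∘ₗ comul) (comul c) =
      (TensorProduct.assoc k M N C).symm (map f (rTensor C g ∘ₗ comul) (comul c)) := by
  have : rTensor C (map f g ∘ₗ comul) ∘ₗ comul =
      (TensorProduct.assoc k M N C).symm.toLinearMap ∘ₗ map f (rTensor C g ∘ₗ comul) ∘ₗ comul := by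
    simp only [coassoc_simps]
  exact congr($this c)

end TensorProduct

section ConvTwist

variable {k B C : Type} [Field k] [Ring B] [Algebra k B] [AddCommGroup C] [Module k C]
  [Coalgebra k C]

/-- The twist `R_ν : p ⊗ c ↦ Σ p ν(c₁) ⊗ c₂`. -/
def convTwist (ν : C →ₗ[k] B) : B ⊗[k] C →ₗ[k] B ⊗[k] C :=
  rTensor C (mul' k B) ∘ₗ (TensorProduct.assoc k B B C).symm.toLinearMap ∘ₗ
    lTensor B (rTensor C ν ∘ₗ comul)

theorem convTwist_tmul (ν : C →ₗ[k] B) (p : B) (c : C) :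
    convTwist ν (p ⊗ₜ c) = p • rTensor C ν (comul c) := by
  simp [convTwist, rTensor_mul'_assoc_symm_tmul]

theorem convTwist_smul (ν : C →ₗ[k] B) (p : B) (z : B ⊗[k] C) :
    convTwist ν (p • z) = p • convTwist ν z := by
  induction z using TensorProduct.induction_on with
  | zero => simp
  | add u v hu hv => simp only [smul_add, map_add, hu, hv]
  | tmul b c => simp [smul_tmul', convTwist_tmul, mul_smul]

theorem convTwist_comp_mk (ν : C →ₗ[k] B) (p : B) :
    convTwist ν ∘ₗ mk k B C p = rTensor C (mulLeft k p ∘ₗ ν) ∘ₗ comul := by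
  ext c
  exact (convTwist_tmul ν p c).trans (smul_map_apply p ν LinearMap.id (comul c))

theorem convTwist_rTensor_comul (μ ν : C →ₗ[k] B) (c : C) :
    convTwist ν (rTensor C μ (comul c)) = rTensor C (conv k μ ν) (comul c) := by
  have : convTwist ν ∘ₗ rTensor C μ ∘ₗ comul = rTensor C (conv k μ ν) ∘ₗ comul := by
    simp only [convTwist, conv, coassoc_simps]
  exact congr($this c)

theorem convTwist_comp (μ ν : C →ₗ[k] B) :
    convTwist ν ∘ₗ convTwist μ = convTwist (conv k μ ν) := by
  ext p c
  simp [convTwist_tmul, convTwist_smul, convTwist_rTensor_comul]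

theorem convTwist_convOne : convTwist (convOne k C B) = LinearMap.id := by
  ext p c
  simp [convTwist_tmul, convOne, rTensor_comp, smul_tmul']

theorem convTwist_bijective {ν : C →ₗ[k] B} (hν : ConvInvertible k ν) :
    Function.Bijective (convTwist ν) := by
  obtain ⟨τ, hντ, hτν⟩ := hν
  have inv {μ μ' : C →ₗ[k] B} (h : conv k μ μ' = convOne k C B) (z : B ⊗[k] C) :
      convTwist μ' (convTwist μ z) = z := by
    rw [← LinearMap.comp_apply, convTwist_comp, h, convTwist_convOne, LinearMap.id_apply]
  exact Function.bijective_iff_has_inverse.mpr ⟨convTwist τ, inv hντ, inv hτν⟩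

end ConvTwist

theorem convInvertible_id {k H : Type} [Field k] [Ring H] [HopfAlgebra k H] :
    ConvInvertible k (LinearMap.id : H →ₗ[k] H) :=
  ⟨HopfAlgebra.antipode k, HopfAlgebra.mul_antipode_lTensor_comul,
    HopfAlgebra.mul_antipode_rTensor_comul⟩

section CrossedProduct

variable {k B H : Type} [Field k] [Ring B] [Algebra k B] [Ring H] [Bialgebra k H]
  {α : H ⊗[k] B →ₗ[k] B} (σ : H ⊗[k] H →ₗ[k] B)

theorem actOn_one (hα : IsWeakAction k B H α) : actOn k B H α 1 = convOne k H B := by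
  ext h
  simp [actOn, convOne, hα.smul_one, Algebra.smul_def]

theorem conv_actOn_actOn (hα : IsWeakAction k B H α) (b c : B) :
    conv k (actOn k B H α b) (actOn k B H α c) = actOn k B H α (b * c) := by
  ext h
  simp only [conv, actOn, coe_comp, Function.comp_apply, flip_apply, mk_apply, hα.smul_mul]
  congr 1
  induction comul (R := k) h using TensorProduct.induction_on with
  | zero => simp
  | add u v hu hv => simp only [map_add, add_tmul, hu, hv]
  | tmul x y => simp

theorem map_comul_tmul_one (hσ : ∀ h : H, σ (h ⊗ₜ 1) = counit (R := k) h • (1 : B)) (f : H) :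
    map σ (mul' k H) (comul (f ⊗ₜ[k] (1 : H))) = 1 ⊗ₜ f := by
  have : map σ (mul' k H) ∘ₗ (tensorTensorTensorComm k H H H H).toLinearMap ∘ₗ
      (mk k (H ⊗[k] H) (H ⊗[k] H)).flip (1 ⊗ₜ 1) = rTensor H (Algebra.linearMap k B ∘ₗ counit) := by
    ext u v
    simp [hσ, Algebra.smul_def]
  rw [comul_tmul, Bialgebra.comul_one, Algebra.TensorProduct.one_def,
    AlgebraTensorModule.tensorTensorTensorComm_eq]
  simpa [rTensor_comp] using congr($this (comul f))

theorem map_comul_one_tmul (hσ₁ : ∀ h : H, σ (1 ⊗ₜ h) = counit (R := k) h • (1 : B)) (g : H) :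
    map σ (mul' k H) (comul ((1 : H) ⊗ₜ[k] g)) = 1 ⊗ₜ g := by
  have : map σ (mul' k H) ∘ₗ (tensorTensorTensorComm k H H H H).toLinearMap ∘ₗ
      mk k (H ⊗[k] H) (H ⊗[k] H) (1 ⊗ₜ 1) = rTensor H (Algebra.linearMap k B ∘ₗ counit) := by
    ext u v
    simp [hσ₁, Algebra.smul_def]
  rw [comul_tmul, Bialgebra.comul_one, Algebra.TensorProduct.one_def,
    AlgebraTensorModule.tensorTensorTensorComm_eq]
  simpa [rTensor_comp] using congr($this (comul g))

/-- Right multiplication by `1 # g`: `p # f ↦ Σ p σ(f₁, g₁) # f₂g₂`. -/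
def cocycleMulRight (g : H) : B ⊗[k] H →ₗ[k] B ⊗[k] H :=
  lTensor B (mul' k H) ∘ₗ convTwist σ ∘ₗ lTensor B ((mk k H H).flip g)

theorem cocycleMulRight_tmul (g : H) (p : B) (f : H) :
    cocycleMulRight σ g (p ⊗ₜ f) = p • map σ (mul' k H) (comul (f ⊗ₜ g)) := by
  simp only [cocycleMulRight, coe_comp, Function.comp_apply, lTensor_tmul, flip_apply, mk_apply,
    convTwist_tmul, lTensor_apply_smul]
  rw [← LinearMap.comp_apply (lTensor B (mul' k H)), lTensor_comp_rTensor]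

theorem cocycleMulRight_smul (g : H) (p : B) (z : B ⊗[k] H) :
    cocycleMulRight σ g (p • z) = p • cocycleMulRight σ g z := by
  simp only [cocycleMulRight, coe_comp, Function.comp_apply, lTensor_apply_smul, convTwist_smul]

theorem cocycleMulRight_one (hσ : ∀ h : H, σ (h ⊗ₜ 1) = counit (R := k) h • (1 : B)) :
    cocycleMulRight σ 1 = LinearMap.id := by
  refine TensorProduct.ext' fun p f => ?_
  rw [cocycleMulRight_tmul, map_comul_tmul_one σ hσ, smul_tmul', smul_eq_mul, mul_one,
    LinearMap.id_apply]

variable (α)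

theorem cpMul_tmul_tmul (x : B ⊗[k] H) (b : B) (g : H) :
    cpMul k B H α σ (x ⊗ₜ (b ⊗ₜ g)) = cocycleMulRight σ g (convTwist (actOn k B H α b) x) := by
  induction x using TensorProduct.induction_on with
  | zero => simp
  | add u v hu hv => simp only [add_tmul, map_add, hu, hv]
  | tmul a f =>
    rw [convTwist_tmul, cocycleMulRight_smul]
    simp only [cpMul, coe_comp, Function.comp_apply, LinearEquiv.coe_coe, TensorProduct.assoc_tmul,
      lTensor_tmul, rTensor_mul'_assoc_symm_tmul, map_tmul]
    congr 1
    induction comul (R := k) f using TensorProduct.induction_on with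
    | zero => simp
    | add u v hu hv => simp only [map_add, add_tmul, hu, hv]
    | tmul u v =>
      simp [cocycleMulRight_tmul, actOn, rTensor_mul'_assoc_symm_tmul,
        AlgebraTensorModule.tensorTensorTensorComm_eq]

theorem cpMul_right_tmul_one (hσ : ∀ h : H, σ (h ⊗ₜ 1) = counit (R := k) h • (1 : B))
    (x : B ⊗[k] H) (b : B) :
    cpMul k B H α σ (x ⊗ₜ (b ⊗ₜ 1)) = convTwist (actOn k B H α b) x := by
  rw [cpMul_tmul_tmul, cocycleMulRight_one σ hσ, LinearMap.id_apply]

theorem cpMul_right_one_tmul (hα : IsWeakAction k B H α) (x : B ⊗[k] H) (g : H) :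
    cpMul k B H α σ (x ⊗ₜ (1 ⊗ₜ g)) = cocycleMulRight σ g x := by
  rw [cpMul_tmul_tmul, actOn_one hα, convTwist_convOne, LinearMap.id_apply]

theorem cpMul_assoc_tmul_one (hα : IsWeakAction k B H α)
    (hσ : ∀ h : H, σ (h ⊗ₜ 1) = counit (R := k) h • (1 : B)) (x : B ⊗[k] H) (b c : B) (g : H) :
    cpMul k B H α σ (cpMul k B H α σ (x ⊗ₜ (b ⊗ₜ 1)) ⊗ₜ (c ⊗ₜ g)) =
      cpMul k B H α σ (x ⊗ₜ ((b * c) ⊗ₜ g)) := by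
  rw [cpMul_right_tmul_one α σ hσ, cpMul_tmul_tmul, cpMul_tmul_tmul, ← conv_actOn_actOn hα,
    ← convTwist_comp, LinearMap.comp_apply]

theorem cpMul_left_tmul_one (hα₁ : ∀ b : B, α ((1 : H) ⊗ₜ b) = b)
    (hσ₁ : ∀ h : H, σ (1 ⊗ₜ h) = counit (R := k) h • (1 : B)) (b c : B) (g : H) :
    cpMul k B H α σ ((b ⊗ₜ 1) ⊗ₜ (c ⊗ₜ g)) = (b * c) ⊗ₜ g := by
  have hc : actOn k B H α c 1 = c := hα₁ c
  rw [cpMul_tmul_tmul, convTwist_tmul, Bialgebra.comul_one, Algebra.TensorProduct.one_def,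
    rTensor_tmul, hc, smul_tmul', smul_eq_mul, cocycleMulRight_tmul, map_comul_one_tmul σ hσ₁,
    smul_tmul', smul_eq_mul, mul_one]

end CrossedProduct

section Galois

variable {k B H : Type} [Field k] [Ring B] [Algebra k B] [Ring H] [Bialgebra k H]
  (α : H ⊗[k] B →ₗ[k] B) (σ : H ⊗[k] H →ₗ[k] B)

theorem canMap_tmul_tmul (x : B ⊗[k] H) (c : B) (g : H) :
    canMap k H (cpMul k B H α σ) (cpCoact k B H) (x ⊗ₜ (c ⊗ₜ g)) =
      rTensor H (cpMul k B H α σ ∘ₗ mk k _ _ x ∘ₗ mk k B H c) (comul g) := by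
  simp only [canMap, cpCoact, coe_comp, Function.comp_apply, LinearEquiv.coe_coe, lTensor_tmul]
  induction comul (R := k) g using TensorProduct.induction_on with
  | zero => simp
  | add u v hu hv => simp only [tmul_add, map_add, hu, hv]
  | tmul h₁ h₂ => simp

theorem midRel_le_ker_canMap (hα : IsWeakAction k B H α)
    (hσ : ∀ h : H, σ (h ⊗ₜ 1) = counit (R := k) h • (1 : B))
    (hα₁ : ∀ b : B, α ((1 : H) ⊗ₜ b) = b)
    (hσ₁ : ∀ h : H, σ (1 ⊗ₜ h) = counit (R := k) h • (1 : B)) :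
    midRel k (cpMul k B H α σ) (Set.range fun b : B => b ⊗ₜ[k] (1 : H)) ≤
      ker (canMap k H (cpMul k B H α σ) (cpCoact k B H)) := by
  rw [midRel, Submodule.span_le]
  rintro _ ⟨x, y, _, ⟨b, rfl⟩, rfl⟩
  rw [SetLike.mem_coe, mem_ker, map_sub, sub_eq_zero]
  induction y using TensorProduct.induction_on with
  | zero => simp
  | add u v hu hv => simp only [tmul_add, map_add, hu, hv]
  | tmul c g =>
    rw [cpMul_left_tmul_one α σ hα₁ hσ₁, canMap_tmul_tmul, canMap_tmul_tmul]
    congr 2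
    ext h
    exact cpMul_assoc_tmul_one α σ hα hσ x b c h

theorem mkQ_comp_lTensor_mk_one_surjective (hα₁ : ∀ b : B, α ((1 : H) ⊗ₜ b) = b)
    (hσ₁ : ∀ h : H, σ (1 ⊗ₜ h) = counit (R := k) h • (1 : B)) :
    Function.Surjective
      ((midRel k (cpMul k B H α σ) (Set.range fun b : B => b ⊗ₜ[k] (1 : H))).mkQ ∘ₗ
        lTensor (B ⊗[k] H) (mk k B H 1)) := by
  set R := midRel k (cpMul k B H α σ) (Set.range fun b : B => b ⊗ₜ[k] (1 : H))
  have hmove (x : B ⊗[k] H) (c : B) (g : H) :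
      R.mkQ (cpMul k B H α σ (x ⊗ₜ (c ⊗ₜ 1)) ⊗ₜ (1 ⊗ₜ g)) = R.mkQ (x ⊗ₜ (c ⊗ₜ g)) := by
    rw [Submodule.mkQ_apply, Submodule.mkQ_apply, Submodule.Quotient.eq]
    refine Submodule.subset_span ⟨x, 1 ⊗ₜ g, c ⊗ₜ 1, ⟨c, rfl⟩, ?_⟩
    rw [cpMul_left_tmul_one α σ hα₁ hσ₁, mul_one]
  have hrange (w : (B ⊗[k] H) ⊗[k] (B ⊗[k] H)) :
      R.mkQ w ∈ range (R.mkQ ∘ₗ lTensor (B ⊗[k] H) (mk k B H 1)) := by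
    induction w using TensorProduct.induction_on with
    | zero => simp
    | add u v hu hv => rw [map_add]; exact add_mem hu hv
    | tmul x y =>
      induction y using TensorProduct.induction_on with
      | zero => simp
      | add u v hu hv => rw [tmul_add, map_add]; exact add_mem hu hv
      | tmul c g => exact ⟨cpMul k B H α σ (x ⊗ₜ (c ⊗ₜ 1)) ⊗ₜ g, hmove x c g⟩
  intro z
  obtain ⟨w, rfl⟩ := R.mkQ_surjective z
  exact hrange w

end Galois

section HopfGalois

variable {k B H : Type} [Field k] [Ring B] [Algebra k B] [Ring H] [HopfAlgebra k H]
  (α : H ⊗[k] B →ₗ[k] B) (σ : H ⊗[k] H →ₗ[k] B)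

theorem canMap_comp_lTensor_mk_one (hα : IsWeakAction k B H α) :
    canMap k H (cpMul k B H α σ) (cpCoact k B H) ∘ₗ lTensor (B ⊗[k] H) (mk k B H 1) =
      (TensorProduct.assoc k B H H).symm.toLinearMap ∘ₗ lTensor B (convTwist LinearMap.id) ∘ₗ
        convTwist σ ∘ₗ (TensorProduct.assoc k B H H).toLinearMap := by
  refine TensorProduct.ext' fun x h => ?_
  induction x using TensorProduct.induction_on with
  | zero => simp
  | add u v hu hv => simp only [add_tmul, map_add, hu, hv]
  | tmul p q =>
    have hmul : cpMul k B H α σ ∘ₗ mk k _ _ (p ⊗ₜ q) ∘ₗ mk k B H 1 =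
        map (mulLeft k p ∘ₗ σ) (mul' k H) ∘ₗ (tensorTensorTensorComm k H H H H).toLinearMap ∘ₗ
          mk k _ _ (comul q) ∘ₗ comul := by
      ext h'
      simp [cpMul_right_one_tmul α σ hα, cocycleMulRight_tmul, smul_map_apply,
        AlgebraTensorModule.tensorTensorTensorComm_eq]
    simp only [coe_comp, Function.comp_apply, lTensor_tmul, mk_apply, canMap_tmul_tmul, hmul,
      LinearEquiv.coe_coe, TensorProduct.assoc_tmul, convTwist_tmul, comul_tmul,
      AlgebraTensorModule.tensorTensorTensorComm_eq]
    -- On `Δ q = a ⊗ b` both sides are `Σ p σ(a ⊗ h₁) ⊗ b h₂ ⊗ h₃`, bracketed in the two ways.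
    induction comul (R := k) q using TensorProduct.induction_on with
    | zero => simp
    | add u v hu hv =>
      simp only [map_add, add_comp, comp_add, rTensor_add, LinearMap.add_apply, add_tmul,
        smul_add, hu, hv]
    | tmul a b =>
      have hab : map (mulLeft k p ∘ₗ σ) (mul' k H) ∘ₗ
          (tensorTensorTensorComm k H H H H).toLinearMap ∘ₗ mk k _ _ (a ⊗ₜ b) =
            map (mulLeft k p ∘ₗ σ ∘ₗ mk k H H a) (mulLeft k b) :=
        TensorProduct.ext' fun _ _ => by simp
      simp only [← comp_assoc] at hab ⊢
      rw [hab, tensorTensorTensorComm_tmul_left, ← comp_apply (rTensor _ σ), rTensor_comp_map,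
        smul_map_apply, ← comp_apply (lTensor B _), lTensor_comp_map, convTwist_comp_mk, comp_id]
      exact rTensor_map_comp_comul_comul _ _ h

theorem canMap_comp_lTensor_mk_one_bijective (hα : IsWeakAction k B H α)
    (hσ : ConvInvertible k σ) :
    Function.Bijective
      (canMap k H (cpMul k B H α σ) (cpCoact k B H) ∘ₗ lTensor (B ⊗[k] H) (mk k B H 1)) := by
  rw [canMap_comp_lTensor_mk_one α σ hα]
  let G := LinearEquiv.ofBijective _ (convTwist_bijective (convInvertible_id (k := k) (H := H)))
  exact (TensorProduct.assoc k B H H).symm.bijective.comp ((LinearEquiv.lTensor B G).bijective.comp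
    ((convTwist_bijective hσ).comp (TensorProduct.assoc k B H H).bijective))

end HopfGalois

theorem crossed_product_galois (k B H : Type) [Field k] [Ring B] [Algebra k B] [Ring H] [HopfAlgebra k H]
    (α : H ⊗[k] B →ₗ[k] B) (σ : H ⊗[k] H →ₗ[k] B)
    (hWA : IsWeakAction k B H α) (hinv : ConvInvertible k σ)
    (hcoc : IsCocycle k B H α σ) (hTM : IsTwistedModule k B H α σ) :
    IsGalois k H (cpMul k B H α σ) (cpCoact k B H)
      (Set.range (fun b : B => b ⊗ₜ[k] (1 : H))) := by
  set R := midRel k (cpMul k B H α σ) (Set.range fun b : B => b ⊗ₜ[k] (1 : H))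
  have hR : R ≤ ker (canMap k H (cpMul k B H α σ) (cpCoact k B H)) :=
    midRel_le_ker_canMap α σ hWA hcoc.norm_right hTM.one_smul hcoc.norm_left
  refine ⟨R.liftQ _ hR, R.liftQ_mkQ _ hR, ?_⟩
  have hΦ := mkQ_comp_lTensor_mk_one_surjective α σ hTM.one_smul hcoc.norm_left
  have hΨ : Function.Bijective (R.liftQ _ hR ∘ (R.mkQ ∘ₗ lTensor (B ⊗[k] H) (mk k B H 1))) := by
    rw [← coe_comp, ← comp_assoc, R.liftQ_mkQ]
    exact canMap_comp_lTensor_mk_one_bijective α σ hWA hinv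
  exact ⟨hΨ.1.of_comp_right hΦ, hΨ.2.of_comp⟩

end CrossedGalois
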